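/- Let (∂, σ; σ̄, σ̂) be a free right twisted multi-derivation on A with induced first order differential calculus Ω¹(A) = A^n_σ (left A-basis ω₁, …, ω_n), and let ξ_i ∈ Hom_A(Ω¹(A), A) be determined by ξ_i(ω_j) = δ_ij. Then every f ∈ Hom_A(Ω¹(A), A) satisfies f = Σ_{i,k} ξ_i · σ̂_ik(f(ω_k)), where · denotes the right A-action (f·a)(ω) = f(a·ω). -/

import Mathlib

/-!
Since `a ω_m = Σ_j ω_j · σ̄_jm(a)` (from `σᵀ • σ̄ = 𝕀`), a right `A`-linear `f` is determined by
its values on the basis: `f(x) = Σ_l f(ω_l) ξ_l(x)` with `ξ_l(x) = Σ_m σ̄_lm(x_m)`.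
It remains to move the coefficient `f(ω_l)` to the right of `ξ_l`, and `σ̄ᵀ • σ̂ = 𝕀` gives
exactly `Σ_i ξ_i · σ̂_il(c) = c ξ_l`.
-/

namespace Stmt9

variable {k A : Type*} [Field k] [Ring A] [Algebra k A] {n : ℕ}

/-- The freeness conditions for `(σ, σ̄, σ̂)`. -/
def IsFreePair (σ σbar σhat : A →ₐ[k] Matrix (Fin n) (Fin n) A) : Prop :=
  (∀ (i j : Fin n) (a : A),
      (∑ l, σbar (σ a j l) i l) = if i = j then a else 0) ∧
  (∀ (i j : Fin n) (a : A),
      (∑ l, σ (σbar a l j) l i) = if i = j then a else 0) ∧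
  (∀ (i j : Fin n) (a : A),
      (∑ l, σhat (σbar a j l) i l) = if i = j then a else 0) ∧
  (∀ (i j : Fin n) (a : A),
      (∑ l, σbar (σhat a l j) l i) = if i = j then a else 0)

variable (σ : A →ₐ[k] Matrix (Fin n) (Fin n) A)

/-- Right `A`-action on `Ω¹(A) = A^n_σ` in left coordinates. -/
def ract (x : Fin n → A) (a : A) : Fin n → A := fun i => ∑ j, x j * σ a j i

/-- Left multiplication on `Ω¹(A)` (coordinatewise). -/
def lmulPi (a : A) : (Fin n → A) →ₗ[k] (Fin n → A) where
  toFun x := fun i => a * x i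
  map_add' x y := by funext i; simp [mul_add]
  map_smul' c x := by funext i; simp [mul_smul_comm]

/-- `Hom_A(Ω¹(A), A)`: right `A`-linear maps. -/
def homD : Submodule k ((Fin n → A) →ₗ[k] A) where
  carrier := {f | ∀ (x : Fin n → A) (a : A), f (ract σ x a) = f x * a}
  add_mem' {f g} hf hg := by
    intro x a
    simp only [LinearMap.add_apply, hf x a, hg x a, add_mul]
  zero_mem' := by intro x a; simp
  smul_mem' c f hf := by
    intro x a
    simp only [LinearMap.smul_apply, hf x a, smul_mul_assoc]

/-- The left basis `ω_i` of `Ω¹(A)`. -/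
def om (i : Fin n) : Fin n → A := Pi.single i 1

/-- `τᵀ • ρ = 𝕀`. -/
def IsTransposeLeftInverse (τ ρ : A →ₐ[k] Matrix (Fin n) (Fin n) A) : Prop :=
  ∀ (i j : Fin n) (a : A), (∑ l, τ (ρ a l j) l i) = if i = j then a else 0

section Expansion

variable {σ} {σbar : A →ₐ[k] Matrix (Fin n) (Fin n) A}

theorem ract_om (j : Fin n) (a : A) : ract σ (om j) a = fun m => σ a j m := by
  funext m
  simp [ract, om, Pi.single_apply]

theorem pi_single_eq_sum_ract
    (hσ : IsTransposeLeftInverse σ σbar) (a : A) (i : Fin n) :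
    (Pi.single i a : Fin n → A) = ∑ j, ract σ (om j) (σbar a j i) := by
  funext m
  simp only [Finset.sum_apply, ract_om, hσ m i a, Pi.single_apply]

theorem homD_apply_eq_sum
    (hσ : IsTransposeLeftInverse σ σbar) (g : homD σ) (y : Fin n → A) :
    g.1 y = ∑ l, g.1 (om l) * ∑ m, σbar (y m) l m := by
  conv_lhs => rw [← Finset.univ_sum_single y]
  simp only [map_sum, pi_single_eq_sum_ract hσ, g.2 _ _, Finset.mul_sum]
  exact Finset.sum_comm

theorem dual_apply
    (hσ : IsTransposeLeftInverse σ σbar)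
    {ξ : Fin n → homD σ} (hξ : ∀ i j, (ξ i).1 (om j) = if i = j then (1 : A) else 0)
    (i : Fin n) (y : Fin n → A) :
    (ξ i).1 y = ∑ m, σbar (y m) i m := by
  simp [homD_apply_eq_sum hσ (ξ i) y, hξ]

theorem homD_apply_eq_sum_mul_dual
    (hσ : IsTransposeLeftInverse σ σbar)
    {ξ : Fin n → homD σ} (hξ : ∀ i j, (ξ i).1 (om j) = if i = j then (1 : A) else 0)
    (g : homD σ) (y : Fin n → A) :
    g.1 y = ∑ l, g.1 (om l) * (ξ l).1 y := by
  simp only [homD_apply_eq_sum hσ g y, dual_apply hσ hξ]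

theorem sum_dual_lmulPi_sigmaHat {σhat : A →ₐ[k] Matrix (Fin n) (Fin n) A}
    (hσ : IsTransposeLeftInverse σ σbar) (hσhat : IsTransposeLeftInverse σbar σhat)
    {ξ : Fin n → homD σ} (hξ : ∀ i j, (ξ i).1 (om j) = if i = j then (1 : A) else 0)
    (c : A) (l : Fin n) (y : Fin n → A) :
    ∑ i, (ξ i).1 (lmulPi (k := k) (σhat c i l) y) = c * (ξ l).1 y := by
  have hcoeff : ∀ p m, ∑ i, σbar (σhat c i l) i p * σbar (y m) p m
      = (if p = l then c else 0) * σbar (y m) p m := fun p m => by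
    rw [← Finset.sum_mul, hσhat p l c]
  calc ∑ i, (ξ i).1 (lmulPi (k := k) (σhat c i l) y)
      = ∑ m, ∑ p, ∑ i, σbar (σhat c i l) i p * σbar (y m) p m := by
        simp only [dual_apply hσ hξ, lmulPi, LinearMap.coe_mk, AddHom.coe_mk, map_mul,
          Matrix.mul_apply]
        rw [Finset.sum_comm]
        exact Finset.sum_congr rfl fun m _ => Finset.sum_comm
    _ = c * (ξ l).1 y := by
        simp [hcoeff, dual_apply hσ hξ, Finset.mul_sum]

end Expansion

theorem dual_basis_expansion
    (σbar σhat : A →ₐ[k] Matrix (Fin n) (Fin n) A)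
    (hfree : IsFreePair σ σbar σhat)
    (ξ : Fin n → homD σ)
    (hξ : ∀ i j, (ξ i).1 (om j) = if i = j then (1 : A) else 0) :
    ∀ (f : homD σ) (x : Fin n → A),
      f.1 x = ∑ i, ∑ l, (ξ i).1 (lmulPi (k := k) (σhat (f.1 (om l)) i l) x) := by
  intro f x
  rw [Finset.sum_comm, homD_apply_eq_sum_mul_dual hfree.2.1 hξ f x]
  exact Finset.sum_congr rfl fun l _ =>
    (sum_dual_lmulPi_sigmaHat hfree.2.1 hfree.2.2.2 hξ _ l x).symm

end Stmt9
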